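/- arXiv:1003.1607 — 4 statements merged into one kernel-verified Lean document; each statement's English description precedes it below -/
import Mathlib

section
/- If λ_1, ..., λ_n are the roots of P_n (counted with multiplicity) and V is the matrix with entries V_{ij} = (c_n/c_{n-i+1}) λ_j^{i-1}, then Ĉ_g V = V D, where D = diag(λ_1, ..., λ_n). In particular, if the λ_j are pairwise distinct then V is invertible and V^{-1} Ĉ_g V = D. -/
/-!
With `d i = c n / c (n - i)`, the matrix `V` is `diag d` times the transposed Vandermonde matrix
`W` of `λ`, and `Ĉ_g = diag d * C * (diag d)⁻¹` for the ordinary companion matrix `C` of `P_n`.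
By Vieta every `λ_j` is a root of `P_n`, which is exactly the statement `C Wᵀ = Wᵀ D`;
conjugating by `diag d` gives `Ĉ_g V = V D`. Distinct `λ_j` make the Vandermonde determinant
nonzero.
-/

open Finset

/-- The `k`-th elementary symmetric function of `l 1, …, l n`. -/
def esymm (n : ℕ) (l : Fin n → ℝ) (k : ℕ) : ℝ :=
  ∑ s ∈ Finset.univ.powersetCard k, ∏ i ∈ s, l i

/-- The generalized companion matrix `Ĉ_g`. -/
noncomputable def genCompanion (n : ℕ) (p c : ℕ → ℝ) : Matrix (Fin n) (Fin n) ℝ :=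
  Matrix.of fun i j =>
    if i.val = n - 1 then c (n - j.val) * p (n - j.val)
    else if j.val = i.val + 1 then c (n - i.val - 1) / c (n - i.val)
    else 0

open Matrix

open Polynomial in
theorem pow_eq_sum_mul_pow_of_esymm {n : ℕ} (l : Fin n → ℝ) (p : ℕ → ℝ)
    (hp : ∀ i, p i = (-1 : ℝ) ^ (i + 1) * esymm n l i) (j : Fin n) :
    l j ^ n = ∑ k : Fin n, p (n - k) * l j ^ (k : ℕ) := by
  set P := ((univ.val.map l).map (X - C ·)).prod
  have hcard : Multiset.card (univ.val.map l) = n := by simp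
  have hcoeff : ∀ k ≤ n, P.coeff k = (-1) ^ (n - k) * esymm n l (n - k) := fun k hk => by
    rw [Multiset.prod_X_sub_C_coeff _ (hk.trans hcard.ge), hcard, Finset.esymm_map_val, esymm]
  have hcoeff_lt : ∀ k : Fin n, P.coeff k = -p (n - k) := fun k => by
    rw [hcoeff k k.isLt.le, hp]
    ring
  have hroot : P.eval (l j) = 0 := by
    refine ((mem_roots').1 ?_).2
    rw [roots_multiset_prod_X_sub_C]
    exact Multiset.mem_map_of_mem l (mem_univ_val j)
  have hdeg : P.natDegree < n + 1 := by
    rw [natDegree_multiset_prod_X_sub_C_eq_card, hcard]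
    omega
  rw [eval_eq_sum_range' hdeg, sum_range_succ, hcoeff n le_rfl, ← Fin.sum_univ_eq_sum_range]
    at hroot
  simp only [hcoeff_lt, Nat.sub_self, pow_zero, esymm, powersetCard_zero, sum_singleton,
    prod_empty, neg_mul, sum_neg_distrib, one_mul] at hroot
  linarith

/-- The companion matrix of `X ^ n - p 1 X ^ (n - 1) - ⋯ - p n`. -/
def companion {R : Type*} [Zero R] [One R] (n : ℕ) (p : ℕ → R) : Matrix (Fin n) (Fin n) R :=
  Matrix.of fun i j =>
    if i.val = n - 1 then p (n - j.val)
    else if j.val = i.val + 1 then 1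
    else 0

theorem companion_mul_vandermonde_transpose {R : Type*} [CommRing R] {n : ℕ} (p : ℕ → R)
    (l : Fin n → R) (hroot : ∀ j, l j ^ n = ∑ k : Fin n, p (n - k) * l j ^ (k : ℕ)) :
    companion n p * (vandermonde l)ᵀ = (vandermonde l)ᵀ * diagonal l := by
  ext i j
  rw [mul_diagonal, mul_apply, transpose_apply, vandermonde_apply]
  by_cases hi : i.val = n - 1
  · simp only [companion, of_apply, if_pos hi, transpose_apply, vandermonde_apply]
    rw [← hroot, hi, ← pow_succ, Nat.sub_add_cancel (by omega)]
  · have hnext : i.val + 1 < n := by omega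
    rw [sum_eq_single ⟨i.val + 1, hnext⟩]
    · simp [companion, hi, pow_succ]
    · intro k _ hk
      have : k.val ≠ i.val + 1 := fun h => hk (Fin.ext h)
      simp [companion, hi, this]
    · simp

theorem genCompanion_mul_diagonal {n : ℕ} (p c : ℕ → ℝ) (hc1 : c 1 = 1)
    (hc : ∀ i, 1 ≤ i → i ≤ n → c i ≠ 0) :
    genCompanion n p c * diagonal (fun i : Fin n => c n / c (n - i)) =
      diagonal (fun i : Fin n => c n / c (n - i)) * companion n p := by
  ext i j
  rw [mul_diagonal, diagonal_mul]
  have hcj : c (n - j) ≠ 0 := hc _ (by omega) (by omega)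
  by_cases hi : i.val = n - 1
  · have : n - i.val = 1 := by omega
    simp only [genCompanion, companion, of_apply, if_pos hi, this, hc1]
    field_simp
  · by_cases hj : j.val = i.val + 1
    · have : n - j.val = n - i.val - 1 := by omega
      rw [this] at hcj
      simp only [genCompanion, companion, of_apply, if_neg hi, if_pos hj, this]
      field_simp
    · simp [genCompanion, companion, hi, hj]

theorem genCompanion_conjugation_general (n : ℕ) (l : Fin n → ℝ)
    (p c : ℕ → ℝ) (hp : ∀ i, p i = (-1 : ℝ) ^ (i + 1) * esymm n l i)
    (hc1 : c 1 = 1) (hc : ∀ i, 2 ≤ i → i ≤ n → c i ≠ 0)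
    (V : Matrix (Fin n) (Fin n) ℝ)
    (hV : ∀ i j : Fin n, V i j = (c n / c (n - i.val)) * l j ^ i.val)
    (D : Matrix (Fin n) (Fin n) ℝ) (hD : D = Matrix.diagonal l) :
    genCompanion n p c * V = V * D ∧
      (Function.Injective l → IsUnit V.det ∧ V⁻¹ * genCompanion n p c * V = D) := by
  have hc_ne_zero : ∀ i, 1 ≤ i → i ≤ n → c i ≠ 0 := fun i hi1 hin =>
    (eq_or_lt_of_le hi1).elim (fun h => h ▸ hc1 ▸ one_ne_zero) (hc i · hin)
  have hV_eq : V = diagonal (fun i : Fin n => c n / c (n - i)) * (vandermonde l)ᵀ := by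
    ext i j
    simp [hV, vandermonde_apply]
  have hGV : genCompanion n p c * V = V * D := by
    rw [hV_eq, hD, ← mul_assoc, genCompanion_mul_diagonal p c hc1 hc_ne_zero, mul_assoc,
      companion_mul_vandermonde_transpose p l (pow_eq_sum_mul_pow_of_esymm l p hp), mul_assoc]
  refine ⟨hGV, fun hl => ?_⟩
  have hdet : IsUnit V.det := by
    rw [hV_eq, det_mul, det_transpose, det_diagonal, isUnit_iff_ne_zero]
    refine mul_ne_zero (prod_ne_zero_iff.mpr fun i _ => ?_) (det_vandermonde_ne_zero_iff.mpr hl)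
    exact div_ne_zero (hc_ne_zero n i.pos le_rfl) (hc_ne_zero _ (by omega) (by omega))
  refine ⟨hdet, ?_⟩
  rw [mul_assoc, hGV, ← mul_assoc, nonsing_inv_mul V hdet, one_mul]

/-- If `λ_1, …, λ_n` are the roots of `P_n` (with multiplicity), `p_i = (-1)^{i-1} σ_i`,
and `V_{ij} = (c_n / c_{n-i+1}) λ_j^{i-1}`, then `Ĉ_g V = V D` with
`D = diag(λ_1, …, λ_n)`; if the `λ_j` are pairwise distinct then `V` is invertible and
`V⁻¹ Ĉ_g V = D`. -/
theorem genCompanion_conjugation (n : ℕ) (hn : 1 < n) (l : Fin n → ℝ)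
    (p c : ℕ → ℝ) (hp : ∀ i, p i = (-1 : ℝ) ^ (i + 1) * esymm n l i)
    (hc1 : c 1 = 1) (hc : ∀ i, 2 ≤ i → i ≤ n → c i ≠ 0)
    (V : Matrix (Fin n) (Fin n) ℝ)
    (hV : ∀ i j : Fin n, V i j = (c n / c (n - i.val)) * l j ^ i.val)
    (D : Matrix (Fin n) (Fin n) ℝ) (hD : D = Matrix.diagonal l) :
    genCompanion n p c * V = V * D ∧
      (Function.Injective l → IsUnit V.det ∧ V⁻¹ * genCompanion n p c * V = D) :=
  genCompanion_conjugation_general n l p c hp hc1 hc V hV D hD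
end

section
/- For n×n diagonalizable-over-ℝ arguments, the matrix B_{n,1} (the generalized companion matrix of P_n with c_i = n/(n-i+1)) has eigenvalue λ_j with eigenvector v_j = (1, 2λ_j, 3λ_j^2, ..., n λ_j^{n-1}) for each root λ_j of P_n. -/
/-!
The first `n - 1` rows of `B_{n,1}` act on `v = ((k + 1) λ^k)_k` as a weighted shift:
`(i + 1)/(i + 2) · (i + 2) λ^(i+1) = λ · (i + 1) λ^i`. The last row gives
`n · ∑_{k<n} (-1)^(n-1-k) σ_{n-k} λ^k`, and by Vieta this equals `n λ^n`, because
`λ` is a root of `∏ i, (X - λ_i) = ∑_{k≤n} (-1)^(n-k) σ_{n-k} X^k`.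
-/

open Finset

/-- The matrix `B_{n,1}`: the generalized companion matrix of `P_n` with
`c_i = n/(n-i+1)`, i.e. superdiagonal entries `i/(i+1)` (1-based) and last row
entries `(-1)^{n-j} (n/j) σ_{n-j+1}`. -/
noncomputable def Bn1 (n : ℕ) (l : Fin n → ℝ) : Matrix (Fin n) (Fin n) ℝ :=
  Matrix.of fun i j =>
    if i.val = n - 1 then
      (-1 : ℝ) ^ (n - 1 - j.val) * ((n : ℝ) / ((j.val : ℝ) + 1)) * esymm n l (n - j.val)
    else if j.val = i.val + 1 then ((i.val : ℝ) + 1) / ((i.val : ℝ) + 2)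
    else 0

open Polynomial
open scoped Matrix

lemma esymm_zero (n : ℕ) (l : Fin n → ℝ) : esymm n l 0 = 1 := by
  simp [esymm]

lemma prod_X_sub_C_coeff (n : ℕ) (l : Fin n → ℝ) {k : ℕ} (hk : k ≤ n) :
    (∏ i, (X - C (l i))).coeff k = (-1) ^ (n - k) * esymm n l (n - k) := by
  have hcard : Multiset.card (univ.val.map l) = n := by simp
  have hprod : ∏ i, (X - C (l i)) = ((univ.val.map l).map fun t => X - C t).prod := by
    rw [Multiset.map_map]; rfl
  rw [hprod, Multiset.prod_X_sub_C_coeff _ (hcard.symm ▸ hk), hcard, esymm,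
    Finset.esymm_map_val]

lemma sum_esymm_mul_pow_eq_pow (n : ℕ) (l : Fin n → ℝ) (j : Fin n) :
    ∑ k : Fin n, (-1) ^ (n - 1 - k.val) * esymm n l (n - k.val) * l j ^ k.val = l j ^ n := by
  set p : ℝ[X] := ∏ i, (X - C (l i))
  have hdeg : p.natDegree < n + 1 := by
    rw [natDegree_prod _ _ fun i _ => X_sub_C_ne_zero _]
    simp
  have hterm : ∀ k ∈ range n,
      p.coeff k * l j ^ k = -((-1) ^ (n - 1 - k) * esymm n l (n - k) * l j ^ k) := by
    intro k hk
    rw [prod_X_sub_C_coeff n l (mem_range.1 hk).le, show n - k = n - 1 - k + 1 by grind]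
    ring
  have hroot : p.eval (l j) = 0 := by
    rw [eval_prod]
    exact prod_eq_zero (mem_univ j) (by simp)
  rw [eval_eq_sum_range' hdeg, sum_range_succ, sum_congr rfl hterm, sum_neg_distrib,
    prod_X_sub_C_coeff n l le_rfl, Nat.sub_self, esymm_zero] at hroot
  rw [Fin.sum_univ_eq_sum_range (fun k => (-1) ^ (n - 1 - k) * esymm n l (n - k) * l j ^ k)]
  linarith

lemma Bn1_mulVec_apply_of_lt (n : ℕ) (l w : Fin n → ℝ) (i : Fin n) (hi : i.val + 1 < n) :
    (Bn1 n l *ᵥ w) i = ((i.val : ℝ) + 1) / ((i.val : ℝ) + 2) * w ⟨i.val + 1, hi⟩ := by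
  rw [Matrix.mulVec, dotProduct, Fintype.sum_eq_single ⟨i.val + 1, hi⟩]
  · simp [Bn1, show i.val ≠ n - 1 by omega]
  · intro k hk
    simp [Bn1, show i.val ≠ n - 1 by omega, show k.val ≠ i.val + 1 from fun h => hk (Fin.ext h)]

lemma Bn1_mulVec_apply_of_eq (n : ℕ) (l w : Fin n → ℝ) (i : Fin n) (hi : i.val = n - 1) :
    (Bn1 n l *ᵥ w) i =
      ∑ k : Fin n, (-1) ^ (n - 1 - k.val) * ((n : ℝ) / ((k.val : ℝ) + 1)) *
        esymm n l (n - k.val) * w k := by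
  simp [Matrix.mulVec, dotProduct, Bn1, hi]

theorem Bn1_eigenvector_general (n : ℕ) (l : Fin n → ℝ) (j : Fin n)
    (v : Fin n → ℝ) (hv : ∀ i : Fin n, v i = ((i.val : ℝ) + 1) * l j ^ i.val) :
    (Bn1 n l).mulVec v = l j • v := by
  funext i
  rw [Pi.smul_apply, smul_eq_mul, hv i]
  obtain hi | hi : i.val + 1 < n ∨ i.val = n - 1 := by omega
  · rw [Bn1_mulVec_apply_of_lt n l v i hi, hv]
    field_simp
    push_cast
    ring
  · have hn : ((n - 1 : ℕ) : ℝ) + 1 = n := by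
      rw [Nat.cast_sub (by omega)]
      ring
    calc (Bn1 n l *ᵥ v) i
        = n * ∑ k : Fin n, (-1) ^ (n - 1 - k.val) * esymm n l (n - k.val) * l j ^ k.val := by
          rw [Bn1_mulVec_apply_of_eq n l v i hi, mul_sum]
          refine sum_congr rfl fun k _ => ?_
          rw [hv k]
          field_simp
      _ = l j * ((i.val + 1) * l j ^ i.val) := by
          rw [sum_esymm_mul_pow_eq_pow, hi, hn, mul_left_comm, ← pow_succ',
            Nat.sub_add_cancel (by omega)]

/-- For each root `λ_j` of `P_n`, the matrix `B_{n,1}` has eigenvalue `λ_j` with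
eigenvector `v_j = (1, 2λ_j, 3λ_j², …, n λ_j^{n-1})`. -/
theorem Bn1_eigenvector (n : ℕ) (hn : 1 < n) (l : Fin n → ℝ) (j : Fin n)
    (v : Fin n → ℝ) (hv : ∀ i : Fin n, v i = ((i.val : ℝ) + 1) * l j ^ i.val) :
    (Bn1 n l).mulVec v = l j • v :=
  Bn1_eigenvector_general n l j v hv
end

section
/- For smooth functions λ_1(x), ..., λ_n(x), the derivative of the (n+2)-th power sum satisfies (1/(n+2)) ∂_x τ_{n+2} = Σ_{i=1}^n ((-1)^{n-i}/i)(σ_1 σ_{n-i+1} - σ_{n-i+2}) ∂_x τ_i, where σ_{n+1} := 0. -/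
open Finset

namespace Multiset
variable {R : Type*} [CommRing R]

lemma esymm_card_add_one (s : Multiset R) : s.esymm (card s + 1) = 0 := by
  simp [esymm]

lemma prod_map_sub_eq_sum_esymm (s : Multiset R) (a : R) :
    (s.map (a - ·)).prod =
      ∑ j ∈ Finset.range (card s + 1), (-1) ^ j * s.esymm j * a ^ (card s - j) := by
  simpa [Polynomial.eval_multiset_prod, Polynomial.eval_finsetSum, mul_assoc] using
    congrArg (Polynomial.eval a) (prod_X_sub_X_eq_sum_esymm s)

lemma pow_card_add_one_eq_sum_add_mul_prod (s : Multiset R) (a : R) :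
    a ^ (card s + 1) =
      ∑ k ∈ Finset.range (card s), (-1) ^ k *
          (s.esymm 1 * s.esymm (k + 1) - s.esymm (k + 2)) * a ^ (card s - 1 - k) +
        (a + s.esymm 1) * (s.map (a - ·)).prod := by
  have htop := esymm_card_add_one s
  set n := card s
  set c : ℕ → R := fun j => (-1) ^ j * s.esymm j
  have hshift : a * ∑ j ∈ Finset.range (n + 1), c j * a ^ (n - j) =
      ∑ j ∈ Finset.range (n + 2), c j * a ^ (n + 1 - j) := by
    rw [Finset.sum_range_succ _ (n + 1), Finset.mul_sum]
    simp only [c, htop, mul_zero, zero_mul, add_zero]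
    refine Finset.sum_congr rfl fun j hj => ?_
    rw [show n + 1 - j = n - j + 1 by have := Finset.mem_range.mp hj; omega, pow_succ]
    ring
  have he0 : s.esymm 0 = 1 := by simp [esymm]
  have hcombine : ∑ k ∈ Finset.range n, c (k + 1 + 1) * a ^ (n + 1 - (k + 1 + 1)) +
      ∑ k ∈ Finset.range n, s.esymm 1 * (c (k + 1) * a ^ (n - (k + 1))) =
      -∑ k ∈ Finset.range n, (-1) ^ k *
          (s.esymm 1 * s.esymm (k + 1) - s.esymm (k + 2)) * a ^ (n - 1 - k) := by
    rw [← Finset.sum_add_distrib, ← Finset.sum_neg_distrib]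
    refine Finset.sum_congr rfl fun k hk => ?_
    rw [show n + 1 - (k + 1 + 1) = n - 1 - k by omega, show n - (k + 1) = n - 1 - k by omega]
    simp only [c, pow_succ]
    ring
  rw [prod_map_sub_eq_sum_esymm, add_mul, hshift, Finset.sum_range_succ', Finset.sum_range_succ',
    Finset.mul_sum, Finset.sum_range_succ']
  simp only [c, he0, zero_add, Nat.sub_zero, Nat.add_sub_cancel, pow_zero, pow_one]
  linear_combination -hcombine

lemma pow_card_add_one_eq_sum_of_mem {s : Multiset R} {a : R} (ha : a ∈ s) :
    a ^ (card s + 1) =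
      ∑ k ∈ Finset.range (card s), (-1) ^ k *
          (s.esymm 1 * s.esymm (k + 1) - s.esymm (k + 2)) * a ^ (card s - 1 - k) := by
  have hroot : (s.map (a - ·)).prod = 0 := prod_eq_zero (mem_map.2 ⟨a, ha, sub_self a⟩)
  simpa [hroot] using pow_card_add_one_eq_sum_add_mul_prod s a

end Multiset

lemma esymm_eq_multiset_esymm (n : ℕ) (l : Fin n → ℝ) (k : ℕ) :
    esymm n l k = (univ.val.map l).esymm k :=
  (Finset.esymm_map_val l univ k).symm

lemma pow_succ_eq_sum_esymm {n : ℕ} (l : Fin n → ℝ) (j : Fin n) :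
    l j ^ (n + 1) = ∑ i ∈ Icc 1 n, (-1 : ℝ) ^ (n - i) *
      (esymm n l 1 * esymm n l (n - i + 1) - esymm n l (n - i + 2)) * l j ^ (i - 1) := by
  have h := Multiset.pow_card_add_one_eq_sum_of_mem
    (Multiset.mem_map_of_mem l (mem_univ_val j))
  simp only [Multiset.card_map, card_val, card_univ, Fintype.card_fin] at h
  rw [← Ico_add_one_right_eq_Icc, sum_Ico_eq_sum_range, Nat.add_sub_cancel]
  simp only [esymm_eq_multiset_esymm, h]
  rw [← sum_range_reflect]
  refine sum_congr rfl fun k hk => ?_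
  have hkn := mem_range.mp hk
  rw [show n - (1 + k) = n - 1 - k by omega, show 1 + k - 1 = k by omega,
    show n - 1 - (n - 1 - k) = k by omega]

lemma deriv_sum_pow {𝕜 ι : Type*} [NontriviallyNormedField 𝕜] [Fintype ι] {f : ι → 𝕜 → 𝕜}
    {x : 𝕜} (hf : ∀ j, DifferentiableAt 𝕜 (f j) x) (k : ℕ) :
    deriv (fun y => ∑ j, f j y ^ k) x = k * ∑ j, f j x ^ (k - 1) * deriv (f j) x := by
  rw [mul_sum]
  exact (HasDerivAt.fun_sum fun j _ => (hf j).hasDerivAt.pow k).deriv.trans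
    (sum_congr rfl fun j _ => by ring)

theorem deriv_powerSum_succ_succ_general (n : ℕ) (l : Fin n → ℝ → ℝ)
    (hl : ∀ j, Differentiable ℝ (l j)) (x : ℝ) :
    (1 / ((n : ℝ) + 2)) * deriv (fun y => ∑ j, l j y ^ (n + 2)) x =
      ∑ i ∈ Finset.Icc 1 n, ((-1 : ℝ) ^ (n - i) / (i : ℝ)) *
        (esymm n (fun j => l j x) 1 * esymm n (fun j => l j x) (n - i + 1) -
          esymm n (fun j => l j x) (n - i + 2)) * deriv (fun y => ∑ j, l j y ^ i) x := by
  have hd := deriv_sum_pow (x := x) fun j => hl j x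
  set c : ℕ → ℝ := fun i => (-1 : ℝ) ^ (n - i) * (esymm n (fun j => l j x) 1 *
    esymm n (fun j => l j x) (n - i + 1) - esymm n (fun j => l j x) (n - i + 2))
  calc (1 / ((n : ℝ) + 2)) * deriv (fun y => ∑ j, l j y ^ (n + 2)) x
      = ∑ j, l j x ^ (n + 1) * deriv (l j) x := by
        rw [hd]; push_cast; field_simp
    _ = ∑ j, (∑ i ∈ Icc 1 n, c i * l j x ^ (i - 1)) * deriv (l j) x := by
        simp only [c, pow_succ_eq_sum_esymm (fun j => l j x)]
    _ = _ := by
        simp only [sum_mul]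
        rw [sum_comm]
        refine sum_congr rfl fun i hi => ?_
        have hi : (i : ℝ) ≠ 0 := by have := (mem_Icc.mp hi).1; positivity
        rw [hd, mul_sum, mul_sum]
        refine sum_congr rfl fun j _ => ?_
        simp only [c]
        field_simp

/-- For differentiable functions `λ_1(x), …, λ_n(x)` with power sums
`τ_k = Σ_j λ_j^k` and elementary symmetric functions `σ_k` (with `σ_{n+1} = 0`),
one has `(1/(n+2)) ∂_x τ_{n+2} = Σ_{i=1}^n ((-1)^{n-i}/i)(σ_1 σ_{n-i+1} - σ_{n-i+2}) ∂_x τ_i`. -/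
theorem deriv_powerSum_succ_succ (n : ℕ) (hn : 0 < n) (l : Fin n → ℝ → ℝ)
    (hl : ∀ j, Differentiable ℝ (l j)) (x : ℝ) :
    (1 / ((n : ℝ) + 2)) * deriv (fun y => ∑ j, l j y ^ (n + 2)) x =
      ∑ i ∈ Finset.Icc 1 n, ((-1 : ℝ) ^ (n - i) / (i : ℝ)) *
        (esymm n (fun j => l j x) 1 * esymm n (fun j => l j x) (n - i + 1) -
          esymm n (fun j => l j x) (n - i + 2)) * deriv (fun y => ∑ j, l j y ^ i) x :=
  deriv_powerSum_succ_succ_general n l hl x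
end

section
/- For any differentiable n×n-matrix-valued function A(t) with characteristic coefficients σ_m(t) (elementary symmetric functions of the eigenvalues, i.e., σ_m = e_m of eigenvalues counted with multiplicity), the derivative satisfies σ_m' = Σ_{i=0}^{m-1} (-1)^i σ_{m-i-1} tr(A^i A') for m = 1, ..., n. -/
/-!
Jacobi's formula `(det M)' = tr(adj M · M')`, applied to `M = x - A(t)`, gives
`d/dt χ_{A(t)}(x) = -tr(adj(x - A) A')` for every `x`. All `χ_{A(t)}` have degree `n`, so
Lagrange interpolation at `n + 1` points transfers this to coefficients: the derivative of the
coefficient of `X^k` in `χ_{A(t)}` is minus that of `X^k` in `tr(adj(X - A) A')`. Comparing coefficients in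
`(X - A) · adj(X - A) = χ_A(X)` shows that the coefficient of `X^k` in `adj(X - A)` is
`∑_i c_{k+1+i} A^i`, where `c_j` is the coefficient of `X^j` in `χ_A`; with
`σ_m = (-1)^m c_{n-m}` this is the claimed formula.
-/

open Finset Matrix Polynomial

theorem Polynomial.hasDerivAt_coeff_of_hasDerivAt_eval {𝕜 : Type*}
    [NontriviallyNormedField 𝕜] {p : 𝕜 → 𝕜[X]} {q : 𝕜[X]} {N : ℕ} {t : 𝕜}
    (hp : ∀ s, (p s).degree < N) (hq : q.degree < N)
    (h : ∀ x, HasDerivAt (fun s => (p s).eval x) (q.eval x) t) (k : ℕ) :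
    HasDerivAt (fun s => (p s).coeff k) (q.coeff k) t := by
  classical
  -- Interpolation at `N` nodes makes each coefficient a fixed linear combination of values.
  obtain ⟨S, hS⟩ := Infinite.exists_subset_card_eq 𝕜 N
  have coeff_eq : ∀ f : 𝕜[X], f.degree < N →
      f.coeff k = ∑ x ∈ S, f.eval x * (Lagrange.basis S id x).coeff k := by
    intro f hf
    conv_lhs => rw [Lagrange.eq_interpolate (f := f) (s := S) (Set.injOn_id _) (hS ▸ hf)]
    simp [Lagrange.interpolate_apply, coeff_C_mul]
  simp only [coeff_eq _ (hp _), coeff_eq q hq]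
  exact HasDerivAt.fun_sum fun x _ => (h x).mul_const _

namespace Matrix

variable {n R : Type*} [Fintype n] [DecidableEq n] [CommRing R]

theorem trace_adjugate_mul (M N : Matrix n n R) :
    (M.adjugate * N).trace = ∑ i, (M.updateCol i fun r => N r i).det := by
  simp only [← cramer_apply, cramer_eq_adjugate_mulVec]
  simp [trace, diag, mul_apply, mulVec, dotProduct]

theorem coeff_matPolyEquiv_adjugate_charmatrix_eq_mul_coeff_succ_add (M : Matrix n n R) (k : ℕ) :
    (matPolyEquiv (charmatrix M).adjugate).coeff k
      = M * (matPolyEquiv (charmatrix M).adjugate).coeff (k + 1)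
        + M.charpoly.coeff (k + 1) • 1 := by
  have h : (X - C M) * matPolyEquiv (charmatrix M).adjugate = M.charpoly.map (algebraMap R _) := by
    rw [← matPolyEquiv_charmatrix, ← _root_.map_mul, mul_adjugate, ← charpoly,
      matPolyEquiv_smul_one]
  have := congrArg (coeff · (k + 1)) h
  simp only [sub_mul, coeff_sub, coeff_X_mul, coeff_C_mul, coeff_map,
    Algebra.algebraMap_eq_smul_one] at this
  rw [← this]
  abel

theorem coeff_matPolyEquiv_adjugate_charmatrix_eq_sum_add (M : Matrix n n R) (k d : ℕ) :
    (matPolyEquiv (charmatrix M).adjugate).coeff k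
      = ∑ i ∈ range d, M.charpoly.coeff (k + 1 + i) • M ^ i
        + M ^ d * (matPolyEquiv (charmatrix M).adjugate).coeff (k + d) := by
  induction d generalizing k with
  | zero => simp
  | succ d ih =>
    rw [ih k, coeff_matPolyEquiv_adjugate_charmatrix_eq_mul_coeff_succ_add M (k + d),
      sum_range_succ, mul_add, ← mul_assoc, ← pow_succ, mul_smul_comm, mul_one,
      add_right_comm k 1 d, ← add_assoc k d 1]
    abel

theorem coeff_matPolyEquiv_adjugate_charmatrix [Nontrivial R] (M : Matrix n n R) (k : ℕ) :
    (matPolyEquiv (charmatrix M).adjugate).coeff k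
      = ∑ i ∈ range (Fintype.card n - k), M.charpoly.coeff (k + 1 + i) • M ^ i := by
  rw [coeff_matPolyEquiv_adjugate_charmatrix_eq_sum_add M k
      (Fintype.card n - k + (matPolyEquiv (charmatrix M).adjugate).natDegree + 1),
    coeff_eq_zero_of_natDegree_lt (by omega), mul_zero, add_zero]
  refine (sum_subset (range_subset_range.mpr (by omega)) fun i _ hi => ?_).symm
  rw [coeff_eq_zero_of_natDegree_lt (by rw [charpoly_natDegree_eq_dim]; simp at hi; omega),
    zero_smul]

theorem coeff_trace_adjugate_charmatrix_mul [Nontrivial R] (M H : Matrix n n R) (k : ℕ) :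
    ((charmatrix M).adjugate * H.map C).trace.coeff k
      = ∑ i ∈ range (Fintype.card n - k), M.charpoly.coeff (k + 1 + i) * (M ^ i * H).trace := by
  have : ((charmatrix M).adjugate * H.map C).trace.coeff k
      = ((matPolyEquiv (charmatrix M).adjugate).coeff k * H).trace := by
    simp [trace, mul_apply, finsetSum_coeff, coeff_mul_C, matPolyEquiv_coeff_apply]
  rw [this, coeff_matPolyEquiv_adjugate_charmatrix, sum_mul, trace_sum]
  simp [trace_smul]

theorem evalRingHom_mapMatrix_charmatrix (M : Matrix n n R) (x : R) :
    (evalRingHom x).mapMatrix (charmatrix M) = scalar n x - M := by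
  ext i j
  obtain rfl | hij := eq_or_ne i j <;> simp [*]

theorem eval_trace_adjugate_charmatrix_mul (M H : Matrix n n R) (x : R) :
    ((charmatrix M).adjugate * H.map C).trace.eval x
      = ((scalar n x - M).adjugate * H).trace := by
  rw [← coe_evalRingHom, AddMonoidHom.map_trace, ← RingHom.mapMatrix_apply, map_mul,
    RingHom.map_adjugate, evalRingHom_mapMatrix_charmatrix]
  congr
  ext
  simp

end Matrix

section HasDerivAt

variable {n 𝕜 : Type*} [Fintype n] [DecidableEq n] [NontriviallyNormedField 𝕜]
  {A : 𝕜 → Matrix n n 𝕜} {A' : Matrix n n 𝕜} {t : 𝕜}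

theorem hasDerivAt_det {M : 𝕜 → Matrix n n 𝕜} {M' : Matrix n n 𝕜}
    (hM : ∀ i j, HasDerivAt (fun s => M s i j) (M' i j) t) :
    HasDerivAt (fun s => (M s).det) ((M t).adjugate * M').trace t := by
  rw [show (fun s => (M s).det) = _ from funext fun s => det_apply' (M s)]
  refine (HasDerivAt.fun_sum fun (σ : Equiv.Perm n) _ =>
    (HasDerivAt.fun_finsetProd fun i _ => hM (σ i) i).const_mul
      ((σ.sign : ℤ) : 𝕜)).congr_deriv ?_
  simp only [trace_adjugate_mul, det_apply', mul_sum, smul_eq_mul]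
  rw [sum_comm]
  refine sum_congr rfl fun i _ => sum_congr rfl fun σ _ => ?_
  rw [← mul_prod_erase _ _ (mem_univ i)]
  have hcol : ∀ j ∈ univ.erase i, (M t).updateCol i (fun r => M' r i) (σ j) j = M t (σ j) j :=
    fun j hj => by simp [(mem_erase.mp hj).1]
  simp only [prod_congr rfl hcol, updateCol_self]
  ring

theorem hasDerivAt_eval_charpoly (hA : ∀ i j, HasDerivAt (fun s => A s i j) (A' i j) t)
    (x : 𝕜) :
    HasDerivAt (fun s => (A s).charpoly.eval x)
      (-((scalar n x - A t).adjugate * A').trace) t := by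
  simp only [eval_charpoly]
  have := hasDerivAt_det (M := fun s => scalar n x - A s) (M' := -A') fun i j => by
    simpa using (hA i j).const_sub (scalar n x i j)
  simpa [mul_neg, trace_neg] using this

theorem hasDerivAt_charpoly_coeff (hA : ∀ i j, HasDerivAt (fun s => A s i j) (A' i j) t)
    (k : ℕ) :
    HasDerivAt (fun s => (A s).charpoly.coeff k)
      (-∑ i ∈ range (Fintype.card n - k),
          (A t).charpoly.coeff (k + 1 + i) * (A t ^ i * A').trace) t := by
  rw [← coeff_trace_adjugate_charmatrix_mul, ← coeff_neg]
  refine hasDerivAt_coeff_of_hasDerivAt_eval (N := Fintype.card n + 1) (fun s => ?_) ?_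
    (fun x => ?_) k
  · rw [charpoly_degree_eq_dim]
    exact_mod_cast Nat.lt_succ_self _
  · rw [degree_neg, degree_lt_iff_coeff_zero]
    intro j hj
    rw [coeff_trace_adjugate_charmatrix_mul, range_eq_empty_iff.mpr (by omega), sum_empty]
  · rw [eval_neg, eval_trace_adjugate_charmatrix_mul]
    exact hasDerivAt_eval_charpoly hA x

end HasDerivAt

theorem deriv_charpoly_esymm_general (n : ℕ) (A A' : ℝ → Matrix (Fin n) (Fin n) ℝ)
    (hA : ∀ (t : ℝ) (i j : Fin n), HasDerivAt (fun s => A s i j) (A' t i j) t)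
    (σ : ℕ → ℝ → ℝ)
    (hσ : ∀ m t, σ m t = (-1 : ℝ) ^ m * ((A t).charpoly.coeff (n - m)))
    (m : ℕ) (hmn : m ≤ n) (t : ℝ) :
    HasDerivAt (σ m)
      (∑ i ∈ Finset.range m,
        (-1 : ℝ) ^ i * σ (m - i - 1) t * ((A t) ^ i * A' t).trace) t := by
  have hcoeff := hasDerivAt_charpoly_coeff (hA t) (n - m)
  rw [Fintype.card_fin, Nat.sub_sub_self hmn] at hcoeff
  rw [show σ m = _ from funext (hσ m)]
  refine (hcoeff.const_mul ((-1 : ℝ) ^ m)).congr_deriv ?_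
  rw [mul_neg, mul_sum, ← sum_neg_distrib]
  refine sum_congr rfl fun i hi => ?_
  obtain ⟨j, rfl⟩ : ∃ j, m = i + j + 1 := ⟨m - i - 1, by simp at hi; omega⟩
  rw [hσ, show n - (i + j + 1 - i - 1) = n - (i + j + 1) + 1 + i by omega,
    show i + j + 1 - i - 1 = j by omega]
  ring

/-- For a differentiable matrix-valued function `A(t)` with
`σ_m(t)` the `m`-th elementary symmetric function of the eigenvalues of `A(t)`
(equivalently `σ_m = (-1)^m ·` the coefficient of `X^{n-m}` in the characteristic
polynomial), the derivative satisfies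
`σ_m' = Σ_{i=0}^{m-1} (-1)^i σ_{m-i-1} tr(A^i A')`. -/
theorem deriv_charpoly_esymm (n : ℕ) (A A' : ℝ → Matrix (Fin n) (Fin n) ℝ)
    (hA : ∀ (t : ℝ) (i j : Fin n), HasDerivAt (fun s => A s i j) (A' t i j) t)
    (σ : ℕ → ℝ → ℝ)
    (hσ : ∀ m t, σ m t = (-1 : ℝ) ^ m * ((A t).charpoly.coeff (n - m)))
    (m : ℕ) (hm : 1 ≤ m) (hmn : m ≤ n) (t : ℝ) :
    HasDerivAt (σ m)
      (∑ i ∈ Finset.range m,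
        (-1 : ℝ) ^ i * σ (m - i - 1) t * ((A t) ^ i * A' t).trace) t :=
  deriv_charpoly_esymm_general n A A' hA σ hσ m hmn t
end
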